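/- For every n ≥ 1 and every subgraph Γ of X_n, there exists a coarse 1-wiring of Γ into Y with volume at most (2^{2^{2n+1}}·f(n)+1)·f(n), the number of vertices of Y_n. -/

import Mathlib

open SimpleGraph

/-- A wiring of `G` into `H`: a map on vertices together with, for each edge
(given by an ordered adjacent pair, compatibly with reversal), a walk in `H`
joining the images of the endpoints. -/
structure Wiring {V : Type*} {W : Type*} (G : SimpleGraph V) (H : SimpleGraph W) where
  toFun : V → W
  walk : ∀ u v : V, G.Adj u v → H.Walk (toFun u) (toFun v)
  walk_symm : ∀ (u v : V) (h : G.Adj u v), walk v u (G.adj_symm h) = (walk u v h).reverse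

namespace Wiring

variable {V : Type*} {W : Type*} {G : SimpleGraph V} {H : SimpleGraph W}

/-- A wiring is a coarse `k`-wiring if the vertex map is at most `k`-to-one and
every edge of `H` lies on at most `k` of the chosen walks.  (Since walks are
indexed by *ordered* adjacent pairs, with the walk of `(v,u)` the reverse of the
walk of `(u,v)`, each edge of `G` is counted twice; hence the bound `2 * k`.) -/
def IsCoarse (Wr : Wiring G H) (k : ℕ) : Prop :=
  (∀ w : W, {v : V | Wr.toFun v = w}.ncard ≤ k) ∧
  (∀ e : Sym2 W, e ∈ H.edgeSet →
    {p : V × V | ∃ h : G.Adj p.1 p.2, e ∈ (Wr.walk p.1 p.2 h).edges}.ncard ≤ 2 * k)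

/-- The vertices of the image of a wiring. -/
def imageVerts (Wr : Wiring G H) : Set W :=
  Set.range Wr.toFun ∪ {w : W | ∃ (u v : V) (h : G.Adj u v), w ∈ (Wr.walk u v h).support}

/-- The volume of a wiring: the number of vertices of its image. -/
noncomputable def volume (Wr : Wiring G H) : ℕ := Wr.imageVerts.ncard

/-- The image of a wiring, as a subgraph of the target. -/
def imageSubgraph (Wr : Wiring G H) : H.Subgraph where
  verts := Wr.imageVerts
  Adj w w' := ∃ (u v : V) (h : G.Adj u v), (Wr.walk u v h).toSubgraph.Adj w w'
  adj_sub := by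
    rintro a b ⟨u, v, h, ha⟩
    exact (Wr.walk u v h).toSubgraph.adj_sub ha
  edge_vert := by
    rintro a b ⟨u, v, h, ha⟩
    refine Or.inr ⟨u, v, h, ?_⟩
    have := (Wr.walk u v h).toSubgraph.edge_vert ha
    rwa [SimpleGraph.Walk.verts_toSubgraph] at this
  symm := by
    refine ⟨?_⟩
    rintro a b ⟨u, v, h, ha⟩
    exact ⟨u, v, h, ha.symm⟩

end Wiring

/-- `wir k G H` : the minimal volume of a coarse `k`-wiring of `G` into `H`
(`⊤` if there is none). -/
noncomputable def wir {V : Type*} {W : Type*} (k : ℕ)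
    (G : SimpleGraph V) (H : SimpleGraph W) : ℕ∞ :=
  sInf {N : ℕ∞ | ∃ Wr : Wiring G H, Wr.IsCoarse k ∧ N = (Wr.volume : ℕ∞)}

/-- The `k`-wiring profile of `X` into `H`. -/
noncomputable def wirProfile {V : Type*} {W : Type*}
    (X : SimpleGraph V) (H : SimpleGraph W) (k n : ℕ) : ℕ∞ :=
  sSup {N : ℕ∞ | ∃ Γ : X.Subgraph, Γ.verts.Finite ∧ Γ.verts.ncard ≤ n ∧ N = wir k Γ.coe H}

/-- One-directional adjacency generating the 2-dimensional integer grid. -/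
def gridStep (p q : ℤ × ℤ) : Prop :=
  (p.1 = q.1 ∧ q.2 = p.2 + 1) ∨ (p.2 = q.2 ∧ q.1 = p.1 + 1)

/-- The 2-dimensional integer grid: vertices `ℤ²`, edges between points at distance 1. -/
def grid : SimpleGraph (ℤ × ℤ) where
  Adj p q := p ≠ q ∧ (gridStep p q ∨ gridStep q p)
  symm := ⟨fun p q h => ⟨h.1.symm, h.2.symm⟩⟩
  loopless := ⟨fun p h => h.1 rfl⟩

/-- One-directional adjacency for the column graphs: vertical steps everywhere,
horizontal steps at heights divisible by `t`. -/
def colStep (t : ℕ) (p q : ℕ × ℕ) : Prop :=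
  (p.1 = q.1 ∧ q.2 = p.2 + 1) ∨ (p.2 = q.2 ∧ t ∣ p.2 ∧ q.1 = p.1 + 1)

/-- Vertices of `X_n`. -/
def XVert (f : ℕ → ℕ) (n : ℕ) : Type :=
  {p : ℕ × ℕ // p.1 < f n ∧ p.2 ≤ 2 ^ 2 ^ (2 * n) * f n}

/-- The graph `X_n`. -/
def Xgraph (f : ℕ → ℕ) (n : ℕ) : SimpleGraph (XVert f n) where
  Adj u v := u ≠ v ∧ (colStep (2 ^ 2 ^ (2 * n)) u.val v.val ∨ colStep (2 ^ 2 ^ (2 * n)) v.val u.val)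
  symm := ⟨fun u v h => ⟨h.1.symm, h.2.symm⟩⟩
  loopless := ⟨fun u h => h.1 rfl⟩

/-- Vertices of `Y_n`. -/
def YVert (f : ℕ → ℕ) (n : ℕ) : Type :=
  {p : ℕ × ℕ // p.1 < f n ∧ p.2 ≤ 2 ^ 2 ^ (2 * n + 1) * f n}

/-- The graph `Y_n`. -/
def Ygraph (f : ℕ → ℕ) (n : ℕ) : SimpleGraph (YVert f n) where
  Adj u v := u ≠ v ∧
    (colStep (2 ^ 2 ^ (2 * n + 1)) u.val v.val ∨ colStep (2 ^ 2 ^ (2 * n + 1)) v.val u.val)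
  symm := ⟨fun u v h => ⟨h.1.symm, h.2.symm⟩⟩
  loopless := ⟨fun u h => h.1 rfl⟩

/-- Vertices of `X = ⨆ (n ≥ 1) X_n`: triples `(n, i, j)` with `(i,j)` a vertex of `X_n`. -/
def XTVert (f : ℕ → ℕ) : Type :=
  {p : ℕ × ℕ × ℕ // 1 ≤ p.1 ∧ p.2.1 < f p.1 ∧ p.2.2 ≤ 2 ^ 2 ^ (2 * p.1) * f p.1}

/-- The graph `X`, the disjoint union of the `X_n` for `n ≥ 1`. -/
def Xtotal (f : ℕ → ℕ) : SimpleGraph (XTVert f) where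
  Adj u v := u ≠ v ∧ u.val.1 = v.val.1 ∧
    (colStep (2 ^ 2 ^ (2 * u.val.1)) u.val.2 v.val.2 ∨
     colStep (2 ^ 2 ^ (2 * u.val.1)) v.val.2 u.val.2)
  symm := ⟨fun u v h => ⟨h.1.symm, h.2.1.symm, by rw [← h.2.1]; exact h.2.2.symm⟩⟩
  loopless := ⟨fun u h => h.1 rfl⟩

/-- Vertices of `Y = ⨆ (n ≥ 1) Y_n`. -/
def YTVert (f : ℕ → ℕ) : Type :=
  {p : ℕ × ℕ × ℕ // 1 ≤ p.1 ∧ p.2.1 < f p.1 ∧ p.2.2 ≤ 2 ^ 2 ^ (2 * p.1 + 1) * f p.1}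

/-- The graph `Y`, the disjoint union of the `Y_n` for `n ≥ 1`. -/
def Ytotal (f : ℕ → ℕ) : SimpleGraph (YTVert f) where
  Adj u v := u ≠ v ∧ u.val.1 = v.val.1 ∧
    (colStep (2 ^ 2 ^ (2 * u.val.1 + 1)) u.val.2 v.val.2 ∨
     colStep (2 ^ 2 ^ (2 * u.val.1 + 1)) v.val.2 u.val.2)
  symm := ⟨fun u v h => ⟨h.1.symm, h.2.1.symm, by rw [← h.2.1]; exact h.2.2.symm⟩⟩
  loopless := ⟨fun u h => h.1 rfl⟩

/-!
Write `T = 2 ^ 2 ^ (2n)`, so that `Y_n` has horizontal edges at the multiples of `T²`. Stretching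
`X_n` vertically by the factor `T`, i.e. `(i, j) ↦ (i, jT)`, wires it into `Y_n`: a vertical edge
becomes the vertical segment of length `T` above the image of its lower end, and a horizontal edge
at a height `j ∈ Tℕ` becomes the horizontal edge at height `jT ∈ T²ℕ`. The vertex map is injective
and distinct edges go to edge-disjoint paths, so this is a coarse 1-wiring, and restricting it to
`Γ` keeps this property. Its image lies in the copy of `Y_n` inside `Y`, which has
`(T² f(n) + 1) f(n)` vertices.
-/

open Function

theorem Nat.eq_of_mul_add_eq_mul_add {a b r r' s : ℕ} (hr : r < s) (hr' : r' < s)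
    (h : a * s + r = b * s + r') : a = b := by
  have hs : 0 < s := by omega
  simpa [Nat.add_comm, Nat.add_mul_div_right _ _ hs, Nat.div_eq_of_lt hr,
    Nat.div_eq_of_lt hr'] using congrArg (· / s) h

namespace Wiring

variable {V V' W W' : Type*} {G : SimpleGraph V} {G' : SimpleGraph V'} {H : SimpleGraph W}
  {H' : SimpleGraph W'}

structure IsInjective (Wr : Wiring G H) : Prop where
  injective : Injective Wr.toFun
  sym2_eq_of_mem_edges : ∀ ⦃u v u' v' : V⦄ (h : G.Adj u v) (h' : G.Adj u' v') ⦃e : Sym2 W⦄,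
    e ∈ (Wr.walk u v h).edges → e ∈ (Wr.walk u' v' h').edges → s(u, v) = s(u', v')

theorem IsInjective.isCoarse_one {Wr : Wiring G H} (hWr : Wr.IsInjective) : Wr.IsCoarse 1 := by
  refine ⟨fun w => ?_, fun e _ => ?_⟩
  · have hfiber : {v | Wr.toFun v = w}.Subsingleton := fun a ha b hb =>
      hWr.injective (ha.trans hb.symm)
    exact (Set.ncard_le_one hfiber.finite).mpr hfiber
  · set S := {p : V × V | ∃ h : G.Adj p.1 p.2, e ∈ (Wr.walk p.1 p.2 h).edges}
    rcases S.eq_empty_or_nonempty with hS | ⟨⟨u, v⟩, huv, he⟩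
    · simp [hS]
    have hsub : S ⊆ {(u, v), (v, u)} := by
      rintro ⟨u', v'⟩ ⟨h', he'⟩
      rcases Sym2.eq_iff.mp (hWr.sym2_eq_of_mem_edges huv h' he he') with
        ⟨rfl, rfl⟩ | ⟨rfl, rfl⟩ <;> simp
    calc S.ncard ≤ ({(u, v), (v, u)} : Set (V × V)).ncard := Set.ncard_le_ncard hsub
      _ ≤ 2 := (Set.ncard_insert_le _ _).trans (by simp)

def comap (Wr : Wiring G H) (φ : G' →g G) : Wiring G' H where
  toFun v := Wr.toFun (φ v)
  walk u v h := Wr.walk (φ u) (φ v) (φ.map_adj h)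
  walk_symm u v h := Wr.walk_symm (φ u) (φ v) (φ.map_adj h)

def map (Wr : Wiring G H) (ψ : H →g H') : Wiring G H' where
  toFun v := ψ (Wr.toFun v)
  walk u v h := (Wr.walk u v h).map ψ
  walk_symm u v h := by rw [Wr.walk_symm, Walk.reverse_map]

theorem IsInjective.comap {Wr : Wiring G H} (hWr : Wr.IsInjective) {φ : G' →g G}
    (hφ : Injective φ) : (Wr.comap φ).IsInjective where
  injective := hWr.injective.comp hφ
  sym2_eq_of_mem_edges _ _ _ _ h h' _ he he' :=
    Sym2.map.injective hφ (by simpa using hWr.sym2_eq_of_mem_edges _ _ he he')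

theorem IsInjective.map {Wr : Wiring G H} (hWr : Wr.IsInjective) {ψ : H →g H'}
    (hψ : Injective ψ) : (Wr.map ψ).IsInjective where
  injective := hψ.comp hWr.injective
  sym2_eq_of_mem_edges _ _ _ _ h h' _ he he' := by
    change _ ∈ ((Wr.walk _ _ h).map ψ).edges at he
    change _ ∈ ((Wr.walk _ _ h').map ψ).edges at he'
    simp only [Walk.edges_map, List.mem_map] at he he'
    obtain ⟨e, he, rfl⟩ := he
    obtain ⟨e', he', hee'⟩ := he'
    rw [Sym2.map.injective hψ hee'] at he'
    exact hWr.sym2_eq_of_mem_edges h h' he he'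

theorem imageVerts_map (Wr : Wiring G H) (ψ : H →g H') :
    (Wr.map ψ).imageVerts = ψ '' Wr.imageVerts := by
  have hsupp : ∀ u v (h : G.Adj u v), ((Wr.map ψ).walk u v h).support =
      (Wr.walk u v h).support.map ψ := fun u v h => Walk.support_map ψ (Wr.walk u v h)
  ext w
  simp only [imageVerts, hsupp, Set.image_union, Set.mem_union, Set.mem_range,
    Set.mem_ofPred_eq, List.mem_map, Set.mem_image]
  aesop

theorem volume_map (Wr : Wiring G H) {ψ : H →g H'} (hψ : Injective ψ) :
    (Wr.map ψ).volume = Wr.volume := by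
  rw [volume, imageVerts_map, Set.ncard_image_of_injective _ hψ, volume]

theorem volume_le_card [Finite W] (Wr : Wiring G H) : Wr.volume ≤ Nat.card W :=
  Set.ncard_le_card _

section Orient

variable (φ : V → W) (r : V → V → Prop) [DecidableRel r]
  (hr : ∀ ⦃u v⦄, G.Adj u v → r u v ∨ r v u) (hasymm : ∀ ⦃u v⦄, r u v → ¬ r v u)
  (walk : ∀ u v, r u v → H.Walk (φ u) (φ v))

def ofOrient : Wiring G H where
  toFun := φ
  walk u v h := if huv : r u v then walk u v huv else (walk v u ((hr h).resolve_left huv)).reverse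
  walk_symm u v h := by
    by_cases huv : r u v
    · simp [huv, hasymm huv]
    · simp [huv, (hr h).resolve_left huv]

theorem mem_edges_ofOrient {u v : V} (h : G.Adj u v) {e : Sym2 W}
    (he : e ∈ ((ofOrient φ r hr hasymm walk).walk u v h).edges) :
    (∃ huv : r u v, e ∈ (walk u v huv).edges) ∨
      (∃ hvu : r v u, e ∈ (walk v u hvu).edges) := by
  simp only [ofOrient] at he
  split at he
  · exact Or.inl ⟨_, he⟩
  · rw [Walk.edges_reverse, List.mem_reverse] at he
    exact Or.inr ⟨_, he⟩

theorem isInjective_ofOrient (hφ : Injective φ)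
    (hwalk : ∀ ⦃u v u' v'⦄ (huv : r u v) (hu'v' : r u' v') ⦃e⦄,
      e ∈ (walk u v huv).edges → e ∈ (walk u' v' hu'v').edges → u = u' ∧ v = v') :
    (ofOrient φ r hr hasymm walk).IsInjective where
  injective := hφ
  sym2_eq_of_mem_edges _ _ _ _ h h' _ he he' := by
    rcases mem_edges_ofOrient φ r hr hasymm walk h he with ⟨_, he⟩ | ⟨_, he⟩ <;>
      rcases mem_edges_ofOrient φ r hr hasymm walk h' he' with ⟨_, he'⟩ | ⟨_, he'⟩ <;>
      obtain ⟨rfl, rfl⟩ := hwalk _ _ he he' <;> simp [Sym2.eq_swap]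

end Orient

end Wiring

theorem colStep.asymm {t : ℕ} {p q : ℕ × ℕ} (hpq : colStep t p q) : ¬ colStep t q p := by
  rintro (⟨_, h⟩ | ⟨_, _, h⟩) <;> rcases hpq with ⟨_, h'⟩ | ⟨_, _, h'⟩ <;> omega

theorem colStep.snd_eq_succ {t : ℕ} {p q : ℕ × ℕ} (hpq : colStep t p q) (h1 : p.1 = q.1) :
    q.2 = p.2 + 1 := by
  rcases hpq with ⟨_, h⟩ | ⟨_, _, h⟩ <;> omega

theorem colStep.of_fst_ne {t : ℕ} {p q : ℕ × ℕ} (hpq : colStep t p q) (h1 : p.1 ≠ q.1) :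
    p.2 = q.2 ∧ t ∣ p.2 ∧ q.1 = p.1 + 1 :=
  hpq.resolve_left fun h => h1 h.1

instance (t : ℕ) : DecidableRel (colStep t) := fun _ _ => inferInstanceAs (Decidable (_ ∨ _))

abbrev ColVert (w h : ℕ) : Type := {p : ℕ × ℕ // p.1 < w ∧ p.2 ≤ h}

def colVertEquiv (w h : ℕ) : ColVert w h ≃ Fin w × Fin (h + 1) where
  toFun p := (⟨p.1.1, p.2.1⟩, ⟨p.1.2, Nat.lt_succ_of_le p.2.2⟩)
  invFun q := ⟨(q.1, q.2), q.1.2, Nat.le_of_lt_succ q.2.2⟩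
  left_inv _ := rfl
  right_inv _ := rfl

instance (w h : ℕ) : Finite (ColVert w h) := .of_equiv _ (colVertEquiv w h).symm

theorem card_colVert (w h : ℕ) : Nat.card (ColVert w h) = w * (h + 1) := by
  simp [Nat.card_congr (colVertEquiv w h)]

/- `Xgraph f n` is definitionally `colGraph (f n) (2 ^ 2 ^ (2 * n) * f n) (2 ^ 2 ^ (2 * n))`,
and `Ygraph f n`, the level `n` of `Ytotal f`, is the same with `2 * n + 1` in place of `2 * n`. -/
def colGraph (w h t : ℕ) : SimpleGraph (ColVert w h) where
  Adj u v := u ≠ v ∧ (colStep t u.val v.val ∨ colStep t v.val u.val)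
  symm := ⟨fun _ _ h => ⟨h.1.symm, h.2.symm⟩⟩
  loopless := ⟨fun _ h => h.1 rfl⟩

namespace colGraph

variable {w h t : ℕ}

theorem adj_up {i a : ℕ} (hi : i < w) (ha : a + 1 ≤ h) :
    (colGraph w h t).Adj ⟨(i, a), hi, by omega⟩ ⟨(i, a + 1), hi, ha⟩ := by
  refine ⟨fun heq => ?_, Or.inl (Or.inl ⟨rfl, rfl⟩)⟩
  simpa using congrArg (fun p : ColVert w h => p.1.2) heq

def upWalk {i : ℕ} (hi : i < w) (a : ℕ) :
    ∀ m (hm : a + m ≤ h),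
      (colGraph w h t).Walk ⟨(i, a), hi, by omega⟩ ⟨(i, a + m), hi, hm⟩
  | 0, _ => .nil
  | m + 1, hm => (upWalk hi a m (by omega)).concat (adj_up hi hm)

theorem mem_edges_upWalk {i : ℕ} (hi : i < w) (a : ℕ) :
    ∀ m (hm : a + m ≤ h) {e}, e ∈ (upWalk (t := t) hi a m hm).edges →
      ∃ r < m, Sym2.map Subtype.val e = s((i, a + r), (i, a + r + 1))
  | 0, _, _, he => by simp [upWalk] at he
  | m + 1, hm, e, he => by
    rw [upWalk, Walk.edges_concat, List.concat_eq_append, List.mem_append,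
      List.mem_singleton] at he
    rcases he with he | rfl
    · obtain ⟨r, hr, hre⟩ := mem_edges_upWalk hi a m _ he
      exact ⟨r, by omega, hre⟩
    · exact ⟨m, by omega, rfl⟩

variable {h' t' s : ℕ}

/- Reducible, so that the endpoints of `upWalk` below match `scale hh u` up to reducible
unfolding, which rewriting with `Walk.edges_copy` needs. -/
abbrev scale (hh : h * s ≤ h') (p : ColVert w h) : ColVert w h' :=
  ⟨(p.1.1, p.1.2 * s), p.2.1, (Nat.mul_le_mul_right s p.2.2).trans hh⟩

theorem scale_injective (hh : h * s ≤ h') (hs : 0 < s) : Injective (scale (w := w) hh) := by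
  rintro ⟨⟨i, j⟩, _⟩ ⟨⟨i', j'⟩, _⟩ heq
  simp only [scale, Subtype.mk.injEq, Prod.mk.injEq] at heq
  obtain ⟨rfl, hj⟩ := heq
  obtain rfl := Nat.eq_of_mul_eq_mul_right hs hj
  rfl

theorem snd_mul_add_le_of_fst_eq (hh : h * s ≤ h') {u v : ColVert w h}
    (huv : colStep t u.1 v.1) (hcol : u.1.1 = v.1.1) : u.1.2 * s + s ≤ h' := by
  simpa [huv.snd_eq_succ hcol, Nat.succ_mul] using (scale hh v).2.2

theorem scale_eq_of_fst_eq (hh : h * s ≤ h') {u v : ColVert w h} (huv : colStep t u.1 v.1)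
    (hcol : u.1.1 = v.1.1) :
    (⟨(u.1.1, u.1.2 * s + s), u.2.1, snd_mul_add_le_of_fst_eq hh huv hcol⟩ : ColVert w h') =
      scale hh v :=
  Subtype.ext (Prod.ext hcol (by simp [huv.snd_eq_succ hcol, Nat.succ_mul]))

theorem adj_scale_of_fst_ne (hh : h * s ≤ h') (ht : t' ∣ t * s) {u v : ColVert w h}
    (huv : colStep t u.1 v.1) (hcol : u.1.1 ≠ v.1.1) :
    (colGraph w h' t').Adj (scale hh u) (scale hh v) := by
  obtain ⟨h2, hdvd, h1⟩ := huv.of_fst_ne hcol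
  refine ⟨fun heq => hcol (congrArg (fun p => p.1.1) heq), .inl (.inr ⟨?_, ?_, h1⟩)⟩
  · simp [h2]
  · exact ht.trans (mul_dvd_mul_right hdvd s)

def scaleWalk (hh : h * s ≤ h') (ht : t' ∣ t * s) {u v : ColVert w h}
    (huv : colStep t u.1 v.1) : (colGraph w h' t').Walk (scale hh u) (scale hh v) :=
  if hcol : u.1.1 = v.1.1 then
    (upWalk u.2.1 (u.1.2 * s) s (snd_mul_add_le_of_fst_eq hh huv hcol)).copy rfl
      (scale_eq_of_fst_eq hh huv hcol)
  else
    .cons (adj_scale_of_fst_ne hh ht huv hcol) .nil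

/- One formula for both kinds of step: `v.1.2 - u.1.2` is `1` for a vertical step and `0` for
a horizontal one, whose single edge is the case `r = 0`. -/
theorem mem_edges_scaleWalk (hh : h * s ≤ h') (ht : t' ∣ t * s) {u v : ColVert w h}
    (huv : colStep t u.1 v.1) (hs : 0 < s) {e : Sym2 (ColVert w h')}
    (he : e ∈ (scaleWalk hh ht huv).edges) :
    ∃ r < s, Sym2.map Subtype.val e =
      s((u.1.1, u.1.2 * s + r), (v.1.1, u.1.2 * s + r + (v.1.2 - u.1.2))) := by
  unfold scaleWalk at he
  split at he
  case isTrue hcol =>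
    rw [Walk.edges_copy] at he
    obtain ⟨r, hr, hre⟩ := mem_edges_upWalk _ _ _ _ he
    refine ⟨r, hr, ?_⟩
    rw [hre, ← hcol, huv.snd_eq_succ hcol, Nat.add_sub_cancel_left]
  case isFalse hcol =>
    obtain ⟨h2, -, -⟩ := huv.of_fst_ne hcol
    rw [Walk.edges_cons, Walk.edges_nil, List.mem_singleton] at he
    subst he
    exact ⟨0, hs, by simp [h2]⟩

theorem eq_of_mem_edges_scaleWalk (hh : h * s ≤ h') (ht : t' ∣ t * s) {u v : ColVert w h}
    (huv : colStep t u.1 v.1) (hs : 0 < s) {u' v' : ColVert w h}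
    (hu'v' : colStep t u'.1 v'.1) {e : Sym2 (ColVert w h')}
    (he : e ∈ (scaleWalk hh ht huv).edges) (he' : e ∈ (scaleWalk hh ht hu'v').edges) :
    u = u' ∧ v = v' := by
  obtain ⟨r, hr, hre⟩ := mem_edges_scaleWalk hh ht huv hs he
  obtain ⟨r', hr', hre'⟩ := mem_edges_scaleWalk hh ht hu'v' hs he'
  have heq := hre.symm.trans hre'
  simp only [Sym2.eq_iff, Prod.mk.injEq] at heq
  unfold colStep at huv hu'v'
  rcases heq with ⟨⟨hi, hj⟩, hi', hj'⟩ | ⟨⟨_, hj⟩, _, hj'⟩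
  · have := Nat.eq_of_mul_add_eq_mul_add hr hr' hj
    exact ⟨Subtype.ext (Prod.ext hi this), Subtype.ext (Prod.ext hi' (by omega))⟩
  · omega

def scaleWiring (hh : h * s ≤ h') (ht : t' ∣ t * s) :
    Wiring (colGraph w h t) (colGraph w h' t') :=
  Wiring.ofOrient (scale hh) (fun u v => colStep t u.1 v.1) (fun _ _ huv => huv.2)
    (fun _ _ => colStep.asymm) fun _ _ => scaleWalk hh ht

theorem isInjective_scaleWiring (hh : h * s ≤ h') (ht : t' ∣ t * s) (hs : 0 < s) :
    (scaleWiring (w := w) hh ht).IsInjective :=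
  Wiring.isInjective_ofOrient _ _ _ _ _ (scale_injective hh hs)
    fun _ _ _ _ huv hu'v' _ he he' => eq_of_mem_edges_scaleWalk hh ht huv hs hu'v' he he'

end colGraph

namespace Ytotal

variable (f : ℕ → ℕ) {n : ℕ} (hn : 1 ≤ n)

def levelHom : colGraph (f n) (2 ^ 2 ^ (2 * n + 1) * f n) (2 ^ 2 ^ (2 * n + 1)) →g Ytotal f where
  toFun p := ⟨(n, p.1), hn, p.2⟩
  map_rel' huv := ⟨fun heq => huv.1 (Subtype.ext (congrArg (fun q => q.1.2) heq)), rfl, huv.2⟩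

theorem levelHom_injective : Injective (levelHom f hn) :=
  fun _ _ heq => Subtype.ext (congrArg (fun q => q.1.2) heq)

end Ytotal

theorem statement3_general
    (f : ℕ → ℕ)
    (n : ℕ) (hn : 1 ≤ n) (Γ : (Xgraph f n).Subgraph) :
    ∃ Wr : Wiring Γ.coe (Ytotal f), Wr.IsCoarse 1 ∧
      Wr.volume ≤ (2 ^ 2 ^ (2 * n + 1) * f n + 1) * f n := by
  have hT : (2 : ℕ) ^ 2 ^ (2 * n + 1) = 2 ^ 2 ^ (2 * n) * 2 ^ 2 ^ (2 * n) := by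
    rw [← pow_add, pow_succ, mul_two]
  have hh : 2 ^ 2 ^ (2 * n) * f n * 2 ^ 2 ^ (2 * n) ≤ 2 ^ 2 ^ (2 * n + 1) * f n :=
    le_of_eq (by rw [hT]; ring)
  let Wr := ((colGraph.scaleWiring hh hT.dvd).comap
    (Γ.hom : Γ.coe →g colGraph (f n) (2 ^ 2 ^ (2 * n) * f n) (2 ^ 2 ^ (2 * n)))).map
    (Ytotal.levelHom f hn)
  refine ⟨Wr, ?_, ?_⟩
  · exact (((colGraph.isInjective_scaleWiring hh hT.dvd (by positivity)).comap
      Γ.hom_injective).map (Ytotal.levelHom_injective f hn)).isCoarse_one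
  · calc Wr.volume ≤ Nat.card (ColVert (f n) (2 ^ 2 ^ (2 * n + 1) * f n)) :=
          Wiring.volume_map _ (Ytotal.levelHom_injective f hn) ▸ Wiring.volume_le_card _
      _ = _ := by rw [card_colVert, mul_comm]

/-- For every `n ≥ 1`, every subgraph of `X_n` admits a coarse
`1`-wiring into `Y` of volume at most `(2^(2^(2n+1))·f n + 1)·f n = |Y_n|`. -/
theorem statement3
    (f : ℕ → ℕ)
    (hsurj : ∀ k, 1 ≤ k → ∃ n, 1 ≤ n ∧ f n = k)
    (hf1 : f 1 = 1)
    (hf : ∀ n, 2 ≤ n → 2 ≤ f n ∧ f n ≤ n)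
    (hinf : ∀ k, 2 ≤ k → {n | f n = k}.Infinite)
    (n : ℕ) (hn : 1 ≤ n) (Γ : (Xgraph f n).Subgraph) :
    ∃ Wr : Wiring Γ.coe (Ytotal f), Wr.IsCoarse 1 ∧
      Wr.volume ≤ (2 ^ 2 ^ (2 * n + 1) * f n + 1) * f n :=
  statement3_general f n hn Γ
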